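/- arXiv:2403.00725 — 2 statements merged into one kernel-verified Lean document; each statement's English description precedes it below -/
import Mathlib

section
/- Given the block matrix M = [[κ·L, κ·U], [κ'·L, κ'·U]] where κ' = 1 - κ, every nonzero eigenvalue of M is an eigenvalue of κ·L + κ'·U, and conversely every eigenvalue of κ·L + κ'·U is an eigenvalue of M. -/
open Matrix Polynomial

variable {m k : Type*} [Fintype m] [Fintype k] [DecidableEq m] [DecidableEq k]

lemma myEvalCharpoly (M : Matrix m m ℝ) (t : ℝ) :
    M.charpoly.eval t = (t • (1 : Matrix m m ℝ) - M).det := by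
  rw [Matrix.charpoly, _root_.eval_det, matPolyEquiv_charmatrix]
  simp [Matrix.smul_one_eq_diagonal]

lemma myDetKey (A : Matrix m k ℝ) (B : Matrix k m ℝ) {t : ℝ} (ht : t ≠ 0) :
    t ^ Fintype.card k * (t • (1 : Matrix m m ℝ) - A * B).det
      = t ^ Fintype.card m * (t • (1 : Matrix k k ℝ) - B * A).det := by
  have hinv : (t • (1 : Matrix m m ℝ)) * (t⁻¹ • 1) = 1 := by
    rw [smul_mul_smul_comm, mul_inv_cancel₀ ht, one_mul, one_smul]
  have hinv' : (t⁻¹ • (1 : Matrix m m ℝ)) * (t • 1) = 1 := by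
    rw [smul_mul_smul_comm, inv_mul_cancel₀ ht, one_mul, one_smul]
  haveI : Invertible (t • (1 : Matrix m m ℝ)) := ⟨t⁻¹ • 1, hinv', hinv⟩
  have hiof : ⅟(t • (1 : Matrix m m ℝ)) = t⁻¹ • 1 := invOf_eq_right_inv hinv
  have h1 : (fromBlocks (t • (1 : Matrix m m ℝ)) A B (1 : Matrix k k ℝ)).det
      = (t • (1 : Matrix m m ℝ) - A * B).det := by
    rw [det_fromBlocks_one₂₂]
  have h2 : (fromBlocks (t • (1 : Matrix m m ℝ)) A B (1 : Matrix k k ℝ)).det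
      = t ^ Fintype.card m * ((1 : Matrix k k ℝ) - t⁻¹ • (B * A)).det := by
    rw [det_fromBlocks₁₁, hiof]
    congr 1
    · simp [smul_smul]
    · congr 1
      rw [Matrix.mul_smul, Matrix.mul_one, Matrix.smul_mul]
  have h3 : (t • (1 : Matrix k k ℝ) - B * A).det
      = t ^ Fintype.card k * ((1 : Matrix k k ℝ) - t⁻¹ • (B * A)).det := by
    rw [← det_smul, smul_sub, smul_smul, mul_inv_cancel₀ ht, one_smul]
  rw [← h1, h2, h3]
  ring

lemma myCharpolyMulComm (A : Matrix m k ℝ) (B : Matrix k m ℝ) :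
    X ^ Fintype.card k * (A * B).charpoly = X ^ Fintype.card m * (B * A).charpoly := by
  have key : ∀ t : ℝ, t ≠ 0 →
      (X ^ Fintype.card k * (A * B).charpoly
        - X ^ Fintype.card m * (B * A).charpoly).eval t = 0 := by
    intro t ht
    simp only [eval_sub, eval_mul, eval_pow, eval_X, myEvalCharpoly]
    rw [myDetKey A B ht]
    ring
  have h0 : X ^ Fintype.card k * (A * B).charpoly
      - X ^ Fintype.card m * (B * A).charpoly = 0 := by
    apply Polynomial.eq_zero_of_infinite_isRoot
    apply Set.Infinite.mono (s := {x : ℝ | x ≠ 0})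
    · exact fun x hx => key x hx
    · exact Set.Finite.infinite_compl (Set.finite_singleton 0)
  exact sub_eq_zero.mp h0

/-- Every nonzero eigenvalue of the block matrix `M = [[κL, κU], [κ'L, κ'U]]`
(with `κ' = 1 - κ`) is an eigenvalue of `κ•L + κ'•U`, and conversely every
eigenvalue of `κ•L + κ'•U` is an eigenvalue of `M`. -/
theorem stmt_4 {n : ℕ} (L U : Matrix (Fin n) (Fin n) ℝ) (κ κ' : ℝ)
    (hκ' : κ' = 1 - κ) :
    (∀ μ : ℝ, μ ≠ 0 →
        (Matrix.fromBlocks (κ • L) (κ • U) (κ' • L) (κ' • U)).charpoly.IsRoot μ →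
        (κ • L + κ' • U).charpoly.IsRoot μ) ∧
    (∀ μ : ℝ, (κ • L + κ' • U).charpoly.IsRoot μ →
        (Matrix.fromBlocks (κ • L) (κ • U) (κ' • L) (κ' • U)).charpoly.IsRoot μ) := by
  set A : Matrix (Fin n ⊕ Fin n) (Fin n) ℝ :=
    fromRows (κ • (1 : Matrix (Fin n) (Fin n) ℝ)) (κ' • 1) with hA
  set B : Matrix (Fin n) (Fin n ⊕ Fin n) ℝ := fromCols L U with hB
  have hAB : A * B = Matrix.fromBlocks (κ • L) (κ • U) (κ' • L) (κ' • U) := by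
    rw [hA, hB, fromRows_mul_fromCols]
    simp [Matrix.smul_mul]
  have hBA : B * A = κ • L + κ' • U := by
    rw [hA, hB, fromCols_mul_fromRows, Matrix.mul_smul, Matrix.mul_smul,
      Matrix.mul_one, Matrix.mul_one]
  have hcard : Fintype.card (Fin n ⊕ Fin n) = 2 * n := by simp [Fintype.card_sum]; ring
  have hkey := myCharpolyMulComm A B
  rw [hAB, hBA, Fintype.card_fin, hcard] at hkey
  have hM : (Matrix.fromBlocks (κ • L) (κ • U) (κ' • L) (κ' • U)).charpoly
      = X ^ n * (κ • L + κ' • U).charpoly := by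
    have hx : (X : ℝ[X]) ^ n ≠ 0 := pow_ne_zero _ X_ne_zero
    apply mul_left_cancel₀ hx
    rw [hkey, two_mul, pow_add, mul_assoc]
  constructor
  · intro μ hμ hroot
    rw [hM] at hroot
    simp only [IsRoot, eval_mul, eval_pow, eval_X] at hroot ⊢
    exact (mul_eq_zero.mp hroot).resolve_left (pow_ne_zero _ hμ)
  · intro μ hroot
    rw [hM]
    simp only [IsRoot, eval_mul, eval_pow, eval_X] at hroot ⊢
    rw [hroot, mul_zero]
end

section
/- For positive reals γ¹, γ², η', δ, γ¹ᴵ, γ²ᴵ, β_C, β_I, κ ∈ [0,1], d2, p > 0: the inequality z1 ≥ z2 holds, where z1 = R̃2 - κ·p·d2·η·γ²·w/(η'·(η' + γ¹ + γ²)), z2 = κ·p·d2·η·w/(η' + γ¹ + γ²) + (1-κ)·p·d2·β_I/(δ + γ¹ᴵ + γ²ᴵ), w = β_C/η + β_I/(δ + γ¹ᴵ + γ²ᴵ), and R̃2 = κ·p·d2·(β_C/η' + η·(δ + γ¹ᴵ)·β_I/(η'·δ·(δ + γ¹ᴵ + γ²ᴵ))) + (1-κ)·p·d2·(δ + γ¹ᴵ)·β_I/(δ·(δ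 + γ¹ᴵ + γ²ᴵ)). -/
/-- The inequality `z1 ≥ z2` from the proof of Proposition 2. -/
theorem stmt_9 (γ1 γ2 η η' δ γ1I γ2I βC βI κ d2 p w R2t z1 z2 : ℝ)
    (hγ1 : 0 < γ1) (hγ2 : 0 < γ2) (hη : 0 < η) (hη' : 0 < η') (hδ : 0 < δ)
    (hγ1I : 0 < γ1I) (hγ2I : 0 < γ2I) (hβC : 0 < βC) (hβI : 0 < βI)
    (hκ : κ ∈ Set.Icc (0 : ℝ) 1) (hd2 : 0 < d2) (hp : 0 < p)
    (hw : w = βC / η + βI / (δ + γ1I + γ2I))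
    (hR2t : R2t = κ * p * d2 * (βC / η' + η * (δ + γ1I) * βI / (η' * δ * (δ + γ1I + γ2I)))
        + (1 - κ) * p * d2 * (δ + γ1I) * βI / (δ * (δ + γ1I + γ2I)))
    (hz1 : z1 = R2t - κ * p * d2 * η * γ2 * w / (η' * (η' + γ1 + γ2)))
    (hz2 : z2 = κ * p * d2 * η * w / (η' + γ1 + γ2)
        + (1 - κ) * p * d2 * βI / (δ + γ1I + γ2I)) :
    z1 ≥ z2 := by
  obtain ⟨hκ0, hκ1⟩ := hκ
  have hS : 0 < δ + γ1I + γ2I := by linarith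
  have hG : 0 < η' + γ1 + γ2 := by linarith
  have key : z1 - z2 =
      κ * p * d2 * (γ1 * βC * δ * (δ + γ1I + γ2I)
        + η * βI * (δ * γ1 + γ1I * (η' + γ1 + γ2)))
        / (η' * δ * (δ + γ1I + γ2I) * (η' + γ1 + γ2))
      + (1 - κ) * p * d2 * (βI * γ1I) / (δ * (δ + γ1I + γ2I)) := by
    subst hw hR2t hz1 hz2
    field_simp
    ring
  have h1 : 0 ≤ κ * p * d2 * (γ1 * βC * δ * (δ + γ1I + γ2I)
      + η * βI * (δ * γ1 + γ1I * (η' + γ1 + γ2)))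
      / (η' * δ * (δ + γ1I + γ2I) * (η' + γ1 + γ2)) := by positivity
  have h2 : 0 ≤ (1 - κ) * p * d2 * (βI * γ1I) / (δ * (δ + γ1I + γ2I)) := by
    have : 0 ≤ 1 - κ := by linarith
    positivity
  linarith
end
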